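/- Let C be a regular, irreducible curve that is projective over a field k, with function field F = k(C), arithmetic genus t, and a k-rational point O, and fix functions f_R as below for all closed points R ≠ O of degree ≥ t+1. If P ≠ O has deg(P) = d ≥ 3t + 1 and Q ≠ O satisfies 2t + 1 ≤ deg(Q) ≤ d, then the symbol {f_P, f_Q} lies in L_{d−1} + ⟨ {f_R, l} : l a nonzero element of RR_{d−1} and R ≠ O a closed point with 2t + 1 ≤ deg(R) ≤ d ⟩, as a subgroup of K₂(F). -/

import Mathlib

/-! Riemann–Roch gives `n, w, u ∈ RR_{d-1}` with `n ≠ 0` and `u + f_P w = f_Q n`. Expanding the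
Steinberg relation `{u / (f_Q n), f_P w / (f_Q n)} = 0` bilinearly then writes `{f_P, f_Q}` as a
sum of symbols `{a, b}` with `b ∈ RR_{d-1}` and `a ∈ RR_{d-1} ∪ {f_P, f_Q}`, up to antisymmetry. -/

open scoped TensorProduct

noncomputable section

/-- The set of Steinberg relations in `Fˣ ⊗_ℤ Fˣ` (written additively):
the elements `a ⊗ b` with `a + b = 1` in `F`. -/
def SteinbergSet (F : Type*) [Field F] :
    Set (TensorProduct ℤ (Additive Fˣ) (Additive Fˣ)) :=
  { x | ∃ a b : Fˣ, (a : F) + (b : F) = 1 ∧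
      x = Additive.ofMul a ⊗ₜ[ℤ] Additive.ofMul b }

/-- Milnor's `K₂` of a field, via Matsumoto's presentation. -/
abbrev K2 (F : Type*) [Field F] :=
  (TensorProduct ℤ (Additive Fˣ) (Additive Fˣ)) ⧸
    Submodule.span ℤ (SteinbergSet F)

/-- The symbol `{f, g}` in `K₂(F)`. -/
def symbol {F : Type*} [Field F] (f g : Fˣ) : K2 F :=
  Submodule.Quotient.mk (Additive.ofMul f ⊗ₜ[ℤ] Additive.ofMul g)

/-- The degree of a divisor `D` on the curve: `∑_P deg(P) · D(P)`,
where `deg P = [k(P) : k]`. -/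
def divDeg (k : Type*) [Field k] {Pt : Type*} (res : Pt → Type*)
    [∀ P, Field (res P)] [∀ P, Algebra k (res P)] (D : Pt →₀ ℤ) : ℤ :=
  ∑ᶠ P, (Module.finrank k (res P) : ℤ) * D P

/-- Axioms for a regular, irreducible curve `C`, projective over a field `k`, with
`H⁰(C, O_C) = k`, presented through: its function field `F = k(C)`, its set `Pt` of
closed points, the residue fields `res P = k(P)`, the normalized valuations `ord P`,
the evaluation maps `ev P` (evaluation at `P` of functions regular at `P`), the
Riemann-Roch spaces `L D = H⁰(C, O_C(D))`, and the arithmetic genus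
`t = dim_k H¹(C, O_C)`, characterized by the Riemann-Roch relations. -/
structure IsProjCurve (k F : Type*) [Field k] [Field F] [Algebra k F]
    {Pt : Type*} (res : Pt → Type*) [∀ P, Field (res P)] [∀ P, Algebra k (res P)]
    (ord : Pt → F → ℤ) (ev : ∀ P, F → res P)
    (L : (Pt →₀ ℤ) → Submodule k F) (t : ℕ) : Prop where
  finiteDimensional_res : ∀ P, FiniteDimensional k (res P)
  ord_mul : ∀ P (f g : F), f ≠ 0 → g ≠ 0 → ord P (f * g) = ord P f + ord P g
  ord_add : ∀ P (f g : F), f ≠ 0 → g ≠ 0 → f + g ≠ 0 →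
      min (ord P f) (ord P g) ≤ ord P (f + g)
  ord_algebraMap : ∀ P (c : k), c ≠ 0 → ord P (algebraMap k F c) = 0
  ord_uniformizer : ∀ P, ∃ f : F, f ≠ 0 ∧ ord P f = 1
  ord_separates : ∀ P Q, (∀ f : F, ord P f = ord Q f) → P = Q
  support_finite : ∀ f : F, f ≠ 0 → {P | ord P f ≠ 0}.Finite
  degree_formula : ∀ f : F, f ≠ 0 →
      ∑ᶠ P, (Module.finrank k (res P) : ℤ) * ord P f = 0
  ev_zero : ∀ P, ev P 0 = 0
  ev_one : ∀ P, ev P 1 = 1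
  ev_add : ∀ P (f g : F), f ≠ 0 → g ≠ 0 → 0 ≤ ord P f → 0 ≤ ord P g →
      ev P (f + g) = ev P f + ev P g
  ev_mul : ∀ P (f g : F), f ≠ 0 → g ≠ 0 → 0 ≤ ord P f → 0 ≤ ord P g →
      ev P (f * g) = ev P f * ev P g
  ev_algebraMap : ∀ P (c : k), ev P (algebraMap k F c) = algebraMap k (res P) c
  ev_eq_zero_iff : ∀ P (f : F), f ≠ 0 → 0 ≤ ord P f → (ev P f = 0 ↔ 0 < ord P f)
  ev_surjective : ∀ P (y : res P), ∃ f : F, f ≠ 0 ∧ 0 ≤ ord P f ∧ ev P f = y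
  mem_L : ∀ (D : Pt →₀ ℤ) (f : F), f ∈ L D ↔ (f ≠ 0 → ∀ P, 0 ≤ D P + ord P f)
  finiteDimensional_L : ∀ D, FiniteDimensional k (L D)
  global_sections : ∀ f : F, f ∈ L 0 ↔ ∃ c : k, algebraMap k F c = f
  rr_ineq : ∀ D : Pt →₀ ℤ,
      divDeg k res D + 1 - t ≤ (Module.finrank k (L D) : ℤ)
  rr_eq : ∀ D : Pt →₀ ℤ, 2 * (t : ℤ) - 2 < divDeg k res D →
      (Module.finrank k (L D) : ℤ) = divDeg k res D + 1 - t

/-- `T` is the tame symbol `K₂(F) → ∐_{P} k(P)^*`: it is determined by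
`T_P({f,g}) = (-1)^{ord_P(f)·ord_P(g)} (f^{ord_P(g)} / g^{ord_P(f)})(P)`. -/
def IsTameSymbol {F : Type*} [Field F] {Pt : Type*} {res : Pt → Type*}
    [∀ P, Field (res P)]
    (ord : Pt → F → ℤ) (ev : ∀ P, F → res P)
    (T : K2 F →+ Π₀ P : Pt, Additive ((res P)ˣ)) : Prop :=
  ∀ (f g : Fˣ) (P : Pt),
    ((Additive.toMul (T (symbol f g) P) : (res P)ˣ) : res P) =
      ev P (((-1 : Fˣ) ^ (ord P (f : F) * ord P (g : F)) *
        f ^ (ord P (g : F)) * g ^ (-ord P (f : F)) : Fˣ) : F)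

/-- `L_d`: the subgroup of `K₂(F)` generated by the symbols `{l, m}` with `l, m`
nonzero elements of the Riemann-Roch space `H⁰(C, O_C(d(O)))`. -/
def Lsub {k F : Type*} [Field k] [Field F] [Algebra k F] {Pt : Type*}
    (L : (Pt →₀ ℤ) → Submodule k F) (O : Pt) (d : ℤ) : AddSubgroup (K2 F) :=
  AddSubgroup.closure
    { x | ∃ l m : Fˣ, (l : F) ∈ L (Finsupp.single O d) ∧
        (m : F) ∈ L (Finsupp.single O d) ∧ x = symbol l m }

section Symbol

variable {F : Type*} [Field F]

lemma symbol_mul_left (a b c : Fˣ) : symbol (a * b) c = symbol a c + symbol b c := by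
  simp [symbol, TensorProduct.add_tmul, ← Submodule.Quotient.mk_add]

lemma symbol_mul_right (a b c : Fˣ) : symbol a (b * c) = symbol a b + symbol a c := by
  simp [symbol, TensorProduct.tmul_add, ← Submodule.Quotient.mk_add]

lemma symbol_one_left (b : Fˣ) : symbol 1 b = 0 := by
  simp [symbol]

lemma symbol_one_right (a : Fˣ) : symbol a 1 = 0 := by
  simp [symbol]

lemma symbol_inv_left (a b : Fˣ) : symbol a⁻¹ b = -symbol a b :=
  eq_neg_of_add_eq_zero_left <| by
    rw [← symbol_mul_left, inv_mul_cancel, symbol_one_left]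

lemma symbol_inv_right (a b : Fˣ) : symbol a b⁻¹ = -symbol a b :=
  eq_neg_of_add_eq_zero_left <| by
    rw [← symbol_mul_right, inv_mul_cancel, symbol_one_right]

lemma symbol_eq_zero_of_add_eq_one {a b : Fˣ} (h : (a : F) + b = 1) : symbol a b = 0 :=
  (Submodule.Quotient.mk_eq_zero _).mpr (Submodule.subset_span ⟨a, b, h, rfl⟩)

lemma symbol_neg_self (a : Fˣ) : symbol a (-a) = 0 := by
  obtain rfl | ha := eq_or_ne a 1
  · exact symbol_one_left _
  have ha' : (a : F) ≠ 1 := mt Units.val_eq_one.mp ha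
  set u := Units.mk0 (1 - (a : F)) (sub_ne_zero.mpr ha'.symm)
  set v := Units.mk0 (1 - (a : F)⁻¹) (sub_ne_zero.mpr (inv_ne_one.mpr ha').symm)
  have hu : symbol a u = 0 := symbol_eq_zero_of_add_eq_one (by simp [u])
  have hv : symbol a v = 0 := by
    rw [← neg_eq_zero, ← symbol_inv_left]
    exact symbol_eq_zero_of_add_eq_one (by simp [v])
  have hneg : -a = u * v⁻¹ := by
    ext
    simp only [Units.val_neg, Units.val_mul, Units.val_inv_eq_inv_val, Units.val_mk0, u, v]
    field_simp
    ring
  rw [hneg, symbol_mul_right, symbol_inv_right, hu, hv, neg_zero, add_zero]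

lemma symbol_anticomm (a b : Fˣ) : symbol a b = -symbol b a := by
  have h := symbol_neg_self (a * b)
  rw [symbol_mul_left, show -(a * b) = -a * b by rw [neg_mul], symbol_mul_right,
    symbol_neg_self, zero_add, show -a * b = a * -b by rw [neg_mul, mul_neg],
    symbol_mul_right, symbol_neg_self, add_zero] at h
  exact eq_neg_of_add_eq_zero_left h

lemma symbol_self (a : Fˣ) : symbol a a = symbol a (-1) := by
  calc symbol a a = symbol a (-1 * -a) := by rw [neg_one_mul, neg_neg]
    _ = symbol a (-1) := by rw [symbol_mul_right, symbol_neg_self, add_zero]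

lemma symbol_eq_of_add_eq_mul {p q n w u : Fˣ} (h : (u : F) + p * w = q * n) :
    symbol p q = symbol p u - symbol p n + symbol q w - symbol q u - symbol q (-1)
      + symbol u n - symbol u w + symbol n w - symbol n (-1) := by
  have hx : ((u * (q * n)⁻¹ : Fˣ) : F) + ((p * w * (q * n)⁻¹ : Fˣ) : F) = 1 := by
    simp only [Units.val_mul, Units.val_inv_eq_inv_val]
    rw [← add_mul, h, mul_inv_cancel₀ (mul_ne_zero q.ne_zero n.ne_zero)]
  have key := symbol_eq_zero_of_add_eq_one hx
  simp only [mul_inv_rev, symbol_mul_left, symbol_mul_right, symbol_inv_left,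
    symbol_inv_right] at key
  rw [symbol_self q, symbol_self n, symbol_anticomm n q, symbol_anticomm u p,
    symbol_anticomm u q, symbol_anticomm n p, symbol_anticomm q p] at key
  rw [← sub_eq_zero, ← key]
  abel

theorem symbol_mem_of_add_eq_mul {M : AddSubgroup (K2 F)} {S : Set F} {p q : Fˣ}
    (hS : ∀ s s' : Fˣ, (s : F) ∈ S → (s' : F) ∈ S → symbol s s' ∈ M)
    (hp : ∀ s : Fˣ, (s : F) ∈ S → symbol p s ∈ M)
    (hq : ∀ s : Fˣ, (s : F) ∈ S → symbol q s ∈ M) (hS₁ : (-1 : F) ∈ S)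
    {n w u : F} (hn : n ∈ S) (hw : w ∈ S) (hu : u ∈ S) (hn₀ : n ≠ 0)
    (h : u + p * w = q * n) : symbol p q ∈ M := by
  have h₁ : ((-1 : Fˣ) : F) ∈ S := by simpa using hS₁
  set N := Units.mk0 n hn₀
  rcases eq_or_ne w 0 with rfl | hw₀
  · have hu₀ : u ≠ 0 := by simpa [← h] using mul_ne_zero q.ne_zero hn₀
    set U := Units.mk0 u hu₀
    have hq' : q = U * N⁻¹ := by
      rw [eq_mul_inv_iff_mul_eq]; ext; simpa [U, N] using h.symm
    rw [hq', symbol_mul_right, symbol_inv_right]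
    exact add_mem (hp U hu) (neg_mem (hp N hn))
  set W := Units.mk0 w hw₀
  rcases eq_or_ne u 0 with rfl | hu₀
  · have hq' : q = p * W * N⁻¹ := by
      rw [eq_mul_inv_iff_mul_eq]; ext; simpa [W, N] using h.symm
    rw [hq', symbol_mul_right, symbol_mul_right, symbol_inv_right, symbol_self]
    exact add_mem (add_mem (hp _ h₁) (hp W hw)) (neg_mem (hp N hn))
  set U := Units.mk0 u hu₀
  rw [symbol_eq_of_add_eq_mul (n := N) (w := W) (u := U) h]
  exact sub_mem (add_mem (sub_mem (add_mem (sub_mem (sub_mem (add_mem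
    (sub_mem (hp U hu) (hp N hn)) (hq W hw)) (hq U hu)) (hq _ h₁)) (hS U N hu hn))
    (hS U W hu hw)) (hS N W hn hw)) (hS N _ hn h₁)

end Symbol

theorem Submodule.exists_ne_zero_mem_eq_add {K V : Type*} [DivisionRing K] [AddCommGroup V]
    [Module K V] {A V₁ V₂ V₃ : Submodule K V} [FiniteDimensional K A] (h₁ : V₁ ≤ A)
    (h₂ : V₂ ≤ A) (h₃ : V₃ ≤ A) (h₂₃ : Disjoint V₂ V₃)
    (hdim : Module.finrank K A < Module.finrank K V₁ + Module.finrank K V₂ + Module.finrank K V₃) :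
    ∃ x ∈ V₁, x ≠ 0 ∧ ∃ y ∈ V₂, ∃ z ∈ V₃, x = y + z := by
  have := Submodule.finiteDimensional_of_le h₁
  have := Submodule.finiteDimensional_of_le h₂
  have := Submodule.finiteDimensional_of_le h₃
  have h₂₃_dim := Submodule.finrank_sup_add_finrank_inf_eq V₂ V₃
  rw [h₂₃.eq_bot, finrank_bot, add_zero] at h₂₃_dim
  have hne : V₁ ⊓ (V₂ ⊔ V₃) ≠ ⊥ := by
    intro hbot
    have h₁₂₃_dim := Submodule.finrank_sup_add_finrank_inf_eq V₁ (V₂ ⊔ V₃)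
    rw [hbot, finrank_bot, add_zero] at h₁₂₃_dim
    have := Submodule.finrank_mono (sup_le h₁ (sup_le h₂ h₃))
    omega
  obtain ⟨x, hx, hx₀⟩ := (Submodule.ne_bot_iff _).mp hne
  obtain ⟨hx₁, hx₂₃⟩ := Submodule.mem_inf.mp hx
  obtain ⟨y, hy, z, hz, rfl⟩ := Submodule.mem_sup.mp hx₂₃
  exact ⟨_, hx₁, hx₀, y, hy, z, hz, rfl⟩

section Curve

variable {k F : Type*} [Field k] [Field F] [Algebra k F]
  {Pt : Type*} {res : Pt → Type*} [∀ P, Field (res P)] [∀ P, Algebra k (res P)]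

lemma divDeg_single (X : Pt) (c : ℤ) :
    divDeg k res (Finsupp.single X c) = Module.finrank k (res X) * c := by
  rw [divDeg, finsum_eq_single _ X fun P hP => by rw [Finsupp.single_eq_of_ne' hP.symm, mul_zero],
    Finsupp.single_eq_same]

lemma divDeg_add (D D' : Pt →₀ ℤ) :
    divDeg k res (D + D') = divDeg k res D + divDeg k res D' := by
  have hfin : ∀ E : Pt →₀ ℤ,
      (Function.support fun P => (Module.finrank k (res P) : ℤ) * E P).Finite :=
    fun E => E.hasFiniteSupport.subset (Function.support_mul_subset_right _ _)
  simp only [divDeg, Finsupp.add_apply, mul_add, finsum_add_distrib (hfin D) (hfin D')]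

lemma divDeg_sub (D D' : Pt →₀ ℤ) :
    divDeg k res (D - D') = divDeg k res D - divDeg k res D' :=
  eq_sub_of_add_eq (by rw [← divDeg_add, sub_add_cancel])

namespace IsProjCurve

variable {ord : Pt → F → ℤ} {ev : ∀ P, F → res P} {L : (Pt →₀ ℤ) → Submodule k F} {t : ℕ}

lemma L_mono (hC : IsProjCurve k F res ord ev L t) : Monotone L := by
  intro D D' h f hf
  rw [hC.mem_L] at hf ⊢
  exact fun hf₀ S => (hf hf₀ S).trans (by linarith [Finsupp.le_def.mp h S])

lemma L_inf_le (hC : IsProjCurve k F res ord ev L t) {D D' D'' : Pt →₀ ℤ}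
    (h : ∀ S, min (D S) (D' S) ≤ D'' S) : L D ⊓ L D' ≤ L D'' := by
  intro f hf
  rw [Submodule.mem_inf, hC.mem_L, hC.mem_L] at hf
  rw [hC.mem_L]
  intro hf₀ S
  have := h S
  have := hf.1 hf₀ S
  have := hf.2 hf₀ S
  omega

lemma L_eq_bot_of_divDeg_neg (hC : IsProjCurve k F res ord ev L t) {D : Pt →₀ ℤ}
    (hD : divDeg k res D < 0) : L D = ⊥ := by
  refine (Submodule.eq_bot_iff _).mpr fun f hf => by_contra fun hf₀ => hD.not_ge ?_
  have hfin : (Function.support fun P => (Module.finrank k (res P) : ℤ) * ord P f).Finite :=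
    (hC.support_finite f hf₀).subset (Function.support_mul_subset_right _ _)
  have hDfin : (Function.support fun P => (Module.finrank k (res P) : ℤ) * D P).Finite :=
    D.hasFiniteSupport.subset (Function.support_mul_subset_right _ _)
  -- the principal divisor of `f` has degree zero, and `D + (f)` is effective
  calc (0 : ℤ) ≤ ∑ᶠ P, (Module.finrank k (res P) : ℤ) * (D P + ord P f) :=
        finsum_nonneg fun P => mul_nonneg (Int.natCast_nonneg _) ((hC.mem_L D f).mp hf hf₀ P)
    _ = divDeg k res D := by
        simp only [mul_add, finsum_add_distrib hDfin hfin, hC.degree_formula f hf₀, add_zero,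
          divDeg]

lemma one_mem_L (hC : IsProjCurve k F res ord ev L t) {D : Pt →₀ ℤ} (hD : 0 ≤ D) :
    (1 : F) ∈ L D :=
  hC.L_mono hD <| (hC.global_sections 1).mpr ⟨1, map_one _⟩

lemma div_mem_L (hC : IsProjCurve k F res ord ev L t) {D D' : Pt →₀ ℤ} {f g : F}
    (hf : f ∈ L D) (hg : g ≠ 0) (h : ∀ S, D S + ord S g ≤ D' S) : f / g ∈ L D' := by
  rw [hC.mem_L] at hf ⊢
  intro hfg S
  have hf₀ : f ≠ 0 := left_ne_zero_of_mul (by simpa [div_eq_mul_inv] using hfg)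
  have hord := hC.ord_mul S (f / g) g hfg hg
  rw [div_mul_cancel₀ f hg] at hord
  have := hf hf₀ S
  have := h S
  omega

theorem exists_ne_zero_mem_L_eq_add (hC : IsProjCurve k F res ord ev L t) {O P Q : Pt}
    (hO : Module.finrank k (res O) = 1) (hP : P ≠ O) (hQ : Q ≠ O) {d : ℕ}
    (hd : Module.finrank k (res P) = d) (hd₁ : 3 * t + 1 ≤ d) (hQd : Module.finrank k (res Q) ≤ d) :
    ∃ X ∈ L (Finsupp.single O (d + Module.finrank k (res Q) - t - 1 : ℤ) - Finsupp.single Q 1),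
      X ≠ 0 ∧ ∃ Y ∈ L (Finsupp.single O (2 * d - t - 1 : ℤ) - Finsupp.single P 1),
      ∃ u ∈ L (Finsupp.single O ((d : ℤ) - 1)), X = Y + u := by
  classical
  set DV := Finsupp.single O (d + Module.finrank k (res Q) - t - 1 : ℤ) - Finsupp.single Q 1
  set DS := Finsupp.single O (2 * d - t - 1 : ℤ) - Finsupp.single P 1
  set DU := Finsupp.single O ((d : ℤ) - 1)
  set DA := Finsupp.single O (2 * d - t - 1 : ℤ)
  have hDV : divDeg k res DV = d - t - 1 := by
    simp only [DV, divDeg_sub, divDeg_single, hO]; ring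
  have hDS : divDeg k res DS = d - t - 1 := by
    simp only [DS, divDeg_sub, divDeg_single, hO, hd]; ring
  have hDU : divDeg k res DU = d - 1 := by
    simp only [DU, divDeg_single, hO]; ring
  have hDA : divDeg k res DA = 2 * d - t - 1 := by
    simp only [DA, divDeg_single, hO]; ring
  have := hC.rr_ineq DV
  have := hC.rr_ineq DS
  have := hC.rr_ineq DU
  have := hC.rr_eq DA (by omega)
  have : FiniteDimensional k (L DA) := hC.finiteDimensional_L DA
  have hle : DV ≤ DA ∧ DS ≤ DA ∧ DU ≤ DA := by
    refine ⟨?_, ?_, ?_⟩ <;> refine Finsupp.le_def.mpr fun S => ?_ <;>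
      simp only [DU, DV, DS, DA, Finsupp.coe_sub, Pi.sub_apply, Finsupp.single_apply] <;> grind
  have hdisj : Disjoint (L DS) (L DU) := by
    rw [disjoint_iff, ← le_bot_iff]
    refine (hC.L_inf_le (D'' := DU - Finsupp.single P 1) fun S => ?_).trans
      (hC.L_eq_bot_of_divDeg_neg ?_).le
    · simp only [DU, DS, Finsupp.coe_sub, Pi.sub_apply, Finsupp.single_apply]
      grind
    · simp only [DU, divDeg_sub, divDeg_single, hO, hd]
      omega
  -- dimensions: `L DV`, `L DS`, `L DU` have at least `d - 2t`, `d - 2t`, `d - t`,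
  -- while `L DA` has `2d - 2t < 3d - 5t`
  exact Submodule.exists_ne_zero_mem_eq_add (hC.L_mono hle.1) (hC.L_mono hle.2.1)
    (hC.L_mono hle.2.2) hdisj (by omega)

theorem exists_add_eq_mul (hC : IsProjCurve k F res ord ev L t) {O P Q : Pt}
    (hO : Module.finrank k (res O) = 1) (hP : P ≠ O) (hQ : Q ≠ O) {d : ℕ}
    (hd : Module.finrank k (res P) = d) (hd₁ : 3 * t + 1 ≤ d) (hQd : Module.finrank k (res Q) ≤ d)
    {p q : Fˣ}
    (hp : ∀ S, ord S p ≤ (Finsupp.single P 1 - ((d : ℤ) - t) • Finsupp.single O 1 : Pt →₀ ℤ) S)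
    (hq : ∀ S, ord S q ≤ (Finsupp.single Q 1 -
      ((Module.finrank k (res Q) : ℤ) - t) • Finsupp.single O 1 : Pt →₀ ℤ) S) :
    ∃ n w u : F, n ∈ L (Finsupp.single O ((d : ℤ) - 1)) ∧ w ∈ L (Finsupp.single O ((d : ℤ) - 1)) ∧
      u ∈ L (Finsupp.single O ((d : ℤ) - 1)) ∧ n ≠ 0 ∧ u + p * w = q * n := by
  classical
  obtain ⟨_, hX, hX₀, Y, hY, u, hu, rfl⟩ :=
    hC.exists_ne_zero_mem_L_eq_add hO hP hQ hd hd₁ hQd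
  refine ⟨(Y + u) / q, Y / p, u, hC.div_mem_L hX q.ne_zero fun S => ?_,
    hC.div_mem_L hY p.ne_zero fun S => ?_, hu, div_ne_zero hX₀ q.ne_zero, by field_simp; ring⟩
  · have := hq S
    simp only [Finsupp.coe_sub, Finsupp.coe_smul, Pi.sub_apply, Pi.smul_apply,
      Finsupp.single_apply, smul_eq_mul] at this ⊢
    grind
  · have := hp S
    simp only [Finsupp.coe_sub, Finsupp.coe_smul, Pi.sub_apply, Pi.smul_apply,
      Finsupp.single_apply, smul_eq_mul] at this ⊢
    grind

end IsProjCurve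

end Curve

/-- Lemma `PQlemma`(1).  Let `C` be a regular, irreducible curve,
projective over `k`, with function field `F`, arithmetic genus `t` and a `k`-rational
point `O`, and fix for every closed point `R ≠ O` with `deg(R) ≥ t + 1` a function
`f_R` with divisor `(R) - D_R - (deg(R) - t)(O)`, `D_R` effective of degree `t`.
If `deg(P) = d ≥ 3t + 1` and `2t + 1 ≤ deg(Q) ≤ d` (with `P, Q ≠ O`), then
`{f_P, f_Q}` lies in
`L_{d-1} + ⟨{f_R, l} : l ∈ RR_{d-1}^*, 2t + 1 ≤ deg(R) ≤ d⟩`. -/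
theorem statement12 (k F : Type*) [Field k] [Field F] [Algebra k F]
    {Pt : Type*} (res : Pt → Type*) [∀ P, Field (res P)] [∀ P, Algebra k (res P)]
    (ord : Pt → F → ℤ) (ev : ∀ P, F → res P)
    (L : (Pt →₀ ℤ) → Submodule k F) (t : ℕ)
    (hC : IsProjCurve k F res ord ev L t)
    (O : Pt) (hO : Module.finrank k (res O) = 1)
    (fR : Pt → Fˣ) (DR : Pt → (Pt →₀ ℤ))
    (hfR : ∀ R, R ≠ O → t + 1 ≤ Module.finrank k (res R) →
      (∀ Q, 0 ≤ DR R Q) ∧ divDeg k res (DR R) = t ∧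
      ∀ Q, ord Q (fR R : F) =
        ((Finsupp.single R 1 - DR R -
          ((Module.finrank k (res R) : ℤ) - t) • Finsupp.single O 1 : Pt →₀ ℤ)) Q)
    (P Q : Pt) (hP : P ≠ O) (hQ : Q ≠ O)
    (d : ℕ) (hd : d = Module.finrank k (res P)) (hd1 : 3 * t + 1 ≤ d)
    (hQ1 : 2 * t + 1 ≤ Module.finrank k (res Q))
    (hQ2 : Module.finrank k (res Q) ≤ d) :
    symbol (fR P) (fR Q) ∈
      Lsub L O ((d : ℤ) - 1) ⊔ AddSubgroup.closure
        { x | ∃ (R : Pt) (l : Fˣ), R ≠ O ∧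
            2 * t + 1 ≤ Module.finrank k (res R) ∧ Module.finrank k (res R) ≤ d ∧
            (l : F) ∈ L (Finsupp.single O ((d : ℤ) - 1)) ∧
            x = symbol (fR R) l } := by
  have hord : ∀ R, R ≠ O → t + 1 ≤ Module.finrank k (res R) → ∀ S, ord S (fR R : F) ≤
      (Finsupp.single R 1 - ((Module.finrank k (res R) : ℤ) - t) • Finsupp.single O 1 :
        Pt →₀ ℤ) S := by
    intro R hR hdeg S
    obtain ⟨hDR, -, hfR⟩ := hfR R hR hdeg
    rw [hfR S, Finsupp.sub_apply, Finsupp.sub_apply, Finsupp.sub_apply]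
    linarith [hDR S]
  obtain ⟨n, w, u, hn, hw, hu, hn₀, h⟩ := hC.exists_add_eq_mul hO hP hQ hd.symm hd1 hQ2
    (hd ▸ hord P hP (by omega)) (hord Q hQ (by omega))
  exact symbol_mem_of_add_eq_mul
    (fun s s' hs hs' => AddSubgroup.mem_sup_left <|
      AddSubgroup.subset_closure ⟨s, s', hs, hs', rfl⟩)
    (fun s hs => AddSubgroup.mem_sup_right <|
      AddSubgroup.subset_closure ⟨P, s, hP, by omega, hd.ge, hs, rfl⟩)
    (fun s hs => AddSubgroup.mem_sup_right <|
      AddSubgroup.subset_closure ⟨Q, s, hQ, hQ1, hQ2, hs, rfl⟩)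
    (neg_mem (hC.one_mem_L (Finsupp.single_nonneg.mpr (by omega)))) hn hw hu hn₀ h

end
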